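/- arXiv:hep-th/0003032 — 6 statements merged into one kernel-verified Lean document; each statement's English description precedes it below -/
import Mathlib

section
/- The improper integral ∫_{1}^{∞} dy / (y²·√(y⁴ − 1)) converges and equals √2·π^{3/2} / Γ(1/4)². -/
open MeasureTheory Real Set

/-!
The substitution `y = t ^ (-1/4)` maps `(0, 1)` onto `(1, ∞)` and turns the integrand into
`(1/4) t^(-1/4) (1 - t)^(-1/2)`, so the integral is `B(3/4, 1/2) / 4 = Γ(3/4) Γ(1/2) / (4 Γ(5/4))`.
With `Γ(5/4) = Γ(1/4) / 4`, `Γ(1/2) = √π` and the reflection formula `Γ(1/4) Γ(3/4) = π √2`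
this is `√2 π^(3/2) / Γ(1/4)²`.
-/

section BetaIntegral

variable {a b : ℝ}

lemma ofReal_rpow_mul_one_sub_rpow {t : ℝ} (ht : t ∈ Icc (0 : ℝ) 1) :
    ((t ^ (a - 1) * (1 - t) ^ (b - 1) : ℝ) : ℂ) =
      (t : ℂ) ^ ((a : ℂ) - 1) * (1 - (t : ℂ)) ^ ((b : ℂ) - 1) := by
  push_cast [Complex.ofReal_cpow ht.1, Complex.ofReal_cpow (sub_nonneg.2 ht.2)]
  rfl

lemma integrableOn_rpow_mul_one_sub_rpow (ha : 0 < a) (hb : 0 < b) :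
    IntegrableOn (fun t : ℝ => t ^ (a - 1) * (1 - t) ^ (b - 1)) (Ioo 0 1) := by
  have hconv := Complex.betaIntegral_convergent (u := a) (v := b) (by simpa) (by simpa)
  rw [intervalIntegrable_iff_integrableOn_Ioc_of_le zero_le_one] at hconv
  refine (IntegrableOn.mono_set hconv.re Ioo_subset_Ioc_self).congr_fun (fun t ht => ?_)
    measurableSet_Ioo
  simp only [← ofReal_rpow_mul_one_sub_rpow (Ioo_subset_Icc_self ht), RCLike.re_to_complex,
    Complex.ofReal_re]

lemma integral_rpow_mul_one_sub_rpow (ha : 0 < a) (hb : 0 < b) :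
    ∫ t in Ioo (0 : ℝ) 1, t ^ (a - 1) * (1 - t) ^ (b - 1) =
      Gamma a * Gamma b / Gamma (a + b) := by
  apply Complex.ofReal_injective
  have hbeta := Complex.betaIntegral_eq_Gamma_mul_div a b (by simpa) (by simpa)
  rw [Complex.betaIntegral, intervalIntegral.integral_of_le zero_le_one,
    integral_Ioc_eq_integral_Ioo, ← setIntegral_congr_fun measurableSet_Ioo
      (fun t ht => ofReal_rpow_mul_one_sub_rpow (Ioo_subset_Icc_self ht))] at hbeta
  rw [← integral_complex_ofReal, hbeta]
  push_cast [← Complex.Gamma_ofReal]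
  rfl

end BetaIntegral

section RpowSubstitution

variable {r : ℝ}

lemma image_rpow_Ioo_zero_one (hr : r < 0) : (fun t : ℝ => t ^ r) '' Ioo 0 1 = Ioi 1 := by
  refine Subset.antisymm ?_ fun y (hy : 1 < y) => ?_
  · rintro _ ⟨t, ht, rfl⟩
    exact one_lt_rpow_of_pos_of_lt_one_of_neg ht.1 ht.2 hr
  · have hy0 : 0 < y := one_pos.trans hy
    exact ⟨y ^ r⁻¹, ⟨rpow_pos_of_pos hy0 _, rpow_lt_one_of_one_lt_of_neg hy (inv_lt_zero.2 hr)⟩,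
      rpow_inv_rpow hy0.le hr.ne⟩

lemma hasDerivWithinAt_rpow_Ioo_zero_one :
    ∀ t ∈ Ioo (0 : ℝ) 1, HasDerivWithinAt (fun t : ℝ => t ^ r) (r * t ^ (r - 1)) (Ioo 0 1) t :=
  fun _ ht => (hasDerivAt_rpow_const (Or.inl ht.1.ne')).hasDerivWithinAt

lemma injOn_rpow_Ioo_zero_one (hr : r < 0) : InjOn (fun t : ℝ => t ^ r) (Ioo 0 1) :=
  ((strictAntiOn_rpow_Ioi_of_exponent_neg hr).mono Ioo_subset_Ioi_self).injOn

theorem integrableOn_Ioi_one_iff_rpow_comp (hr : r < 0) (f : ℝ → ℝ) :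
    IntegrableOn f (Ioi 1) ↔
      IntegrableOn (fun t => |r * t ^ (r - 1)| * f (t ^ r)) (Ioo 0 1) := by
  simpa only [image_rpow_Ioo_zero_one hr, smul_eq_mul] using
    integrableOn_image_iff_integrableOn_abs_deriv_smul measurableSet_Ioo
      hasDerivWithinAt_rpow_Ioo_zero_one (injOn_rpow_Ioo_zero_one hr) f

theorem integral_Ioi_one_eq_rpow_comp (hr : r < 0) (f : ℝ → ℝ) :
    ∫ y in Ioi 1, f y = ∫ t in Ioo 0 1, |r * t ^ (r - 1)| * f (t ^ r) := by
  simpa only [image_rpow_Ioo_zero_one hr, smul_eq_mul] using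
    integral_image_eq_integral_abs_deriv_smul measurableSet_Ioo
      hasDerivWithinAt_rpow_Ioo_zero_one (injOn_rpow_Ioo_zero_one hr) f

end RpowSubstitution

lemma Gamma_one_quarter_mul_Gamma_three_quarters :
    Gamma (1 / 4) * Gamma (3 / 4) = π * √2 := by
  have h := Gamma_mul_Gamma_one_sub (1 / 4)
  rw [show (1 : ℝ) - 1 / 4 = 3 / 4 by norm_num, show π * (1 / 4) = π / 4 by ring,
    sin_pi_div_four] at h
  rw [h]
  field_simp
  exact (sq_sqrt zero_le_two).symm

lemma substituted_integrand_eq_beta_integrand {t : ℝ} (ht : t ∈ Ioo (0 : ℝ) 1) :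
    |(-1 / 4) * t ^ ((-1 / 4 : ℝ) - 1)| *
        (1 / ((t ^ (-1 / 4 : ℝ)) ^ 2 * √((t ^ (-1 / 4 : ℝ)) ^ 4 - 1))) =
      1 / 4 * (t ^ ((3 / 4 : ℝ) - 1) * (1 - t) ^ ((1 / 2 : ℝ) - 1)) := by
  obtain ⟨ht0, ht1⟩ := ht
  set y := t ^ (-1 / 4 : ℝ) with hy
  have hy0 : 0 < y := rpow_pos_of_pos ht0 _
  have hy4 : y ^ 4 = t⁻¹ := by
    rw [← rpow_natCast, ← rpow_mul ht0.le]
    norm_num [rpow_neg_one]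
  have hy4_gt : 1 < y ^ 4 := hy4 ▸ (one_lt_inv₀ ht0).2 ht1
  have hpow : t ^ ((-1 / 4 : ℝ) - 1) = y ^ 5 := by
    rw [rpow_sub ht0, rpow_one, ← hy, div_eq_mul_inv, ← hy4]
    ring
  have h34 : t ^ ((3 / 4 : ℝ) - 1) = y := by norm_num [hy]
  have hsqrt : (1 - t) ^ ((1 / 2 : ℝ) - 1) = y ^ 2 / √(y ^ 4 - 1) := by
    have h1t : 1 - t = (y ^ 4 - 1) / (y ^ 2) ^ 2 := by
      rw [← pow_mul, hy4]
      field_simp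
    rw [show (1 / 2 : ℝ) - 1 = -(1 / 2) by norm_num, rpow_neg (by linarith), ← sqrt_eq_rpow,
      h1t, sqrt_div' _ (by positivity), sqrt_sq (by positivity), inv_div]
  have hsqrt_pos : 0 < √(y ^ 4 - 1) := sqrt_pos.2 (by linarith)
  rw [hpow, h34, hsqrt, abs_mul, abs_of_neg (by norm_num), abs_of_pos (by positivity)]
  field_simp

/-- The improper integral `∫_{1}^{∞} dy / (y²·√(y⁴ − 1))` converges and equals
`√2·π^{3/2} / Γ(1/4)²`. -/
theorem adS5_wilson_loop_length_integral :
    IntegrableOn (fun y : ℝ => 1 / (y ^ 2 * Real.sqrt (y ^ 4 - 1))) (Ioi 1) ∧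
    ∫ y in Ioi (1 : ℝ), 1 / (y ^ 2 * Real.sqrt (y ^ 4 - 1)) =
      Real.sqrt 2 * Real.pi ^ ((3 : ℝ) / 2) / (Real.Gamma (1 / 4)) ^ 2 := by
  set f : ℝ → ℝ := fun y => 1 / (y ^ 2 * √(y ^ 4 - 1))
  have hr : (-1 / 4 : ℝ) < 0 := by norm_num
  have hsubst : EqOn (fun t => |(-1 / 4) * t ^ ((-1 / 4 : ℝ) - 1)| * f (t ^ (-1 / 4 : ℝ)))
      (fun t => 1 / 4 * (t ^ ((3 / 4 : ℝ) - 1) * (1 - t) ^ ((1 / 2 : ℝ) - 1))) (Ioo 0 1) :=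
    fun _ ht => substituted_integrand_eq_beta_integrand ht
  refine ⟨(integrableOn_Ioi_one_iff_rpow_comp hr f).2 ?_, ?_⟩
  · have hbeta := integrableOn_rpow_mul_one_sub_rpow (a := 3 / 4) (b := 1 / 2) (by norm_num)
      (by norm_num)
    exact IntegrableOn.congr_fun (hbeta.const_mul (1 / 4)) hsubst.symm measurableSet_Ioo
  rw [integral_Ioi_one_eq_rpow_comp hr f, setIntegral_congr_fun measurableSet_Ioo hsubst,
    integral_const_mul, integral_rpow_mul_one_sub_rpow (by norm_num) (by norm_num)]
  have hGamma_five_quarters : Gamma (3 / 4 + 1 / 2) = Gamma (1 / 4) / 4 := by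
    rw [show (3 / 4 + 1 / 2 : ℝ) = 1 / 4 + 1 by norm_num, Gamma_add_one (by norm_num)]
    ring
  have hGamma_three_quarters : Gamma (3 / 4) = π * √2 / Gamma (1 / 4) := by
    rw [eq_div_iff (Gamma_pos_of_pos (by norm_num)).ne', mul_comm,
      Gamma_one_quarter_mul_Gamma_three_quarters]
  have hpi : π ^ (3 / 2 : ℝ) = π * √π := by
    rw [show (3 / 2 : ℝ) = 1 + 1 / 2 by norm_num, rpow_add pi_pos, rpow_one, sqrt_eq_rpow]
  rw [hGamma_five_quarters, hGamma_three_quarters, Gamma_one_half_eq, hpi]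
  field_simp
end

section
/- The improper integral ∫_{1}^{∞} ( y²/√(y⁴ − 1) − 1 ) dy converges, and ∫_{1}^{∞} ( y²/√(y⁴ − 1) − 1 ) dy − 1 = − √2·π^{3/2} / Γ(1/4)². -/
/-!
With `f` the integrand, the function `√(y⁴ - 1) / y - y` has derivative
`f y + 1 / (y² √(y⁴ - 1))`, a sum of two nonnegative terms, and it increases from `-1` at `y = 1`
to `0` at infinity. Hence both terms are integrable on `(1, ∞)` and
`∫ f - 1 = -∫ 1 / (y² √(y⁴ - 1))`. The substitution `x = y⁻⁴` turns the last integral into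
`B(3/4, 1/2) / 4`, which `Γ(5/4) = Γ(1/4) / 4`, `Γ(1/2) = √π` and the reflection formula
`Γ(1/4) Γ(3/4) = √2 π` evaluate to `√2 π^{3/2} / Γ(1/4)²`.
-/

open MeasureTheory Real Set Filter Topology

lemma IntegrableOn.of_add_of_nonneg {α : Type*} [MeasurableSpace α] {μ : Measure α} {s : Set α}
    {f g : α → ℝ} (hs : MeasurableSet s) (hfg : IntegrableOn (fun x ↦ f x + g x) s μ)
    (hf : AEStronglyMeasurable f (μ.restrict s)) (hf0 : ∀ x ∈ s, 0 ≤ f x)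
    (hg0 : ∀ x ∈ s, 0 ≤ g x) : IntegrableOn f s μ := by
  refine hfg.mono' hf ?_
  filter_upwards [ae_restrict_mem hs] with x hx
  rw [norm_of_nonneg (hf0 x hx)]
  linarith [hg0 x hx]

lemma integral_Ioo_rpow_mul_one_sub_rpow {α β : ℝ} (hα : 0 < α) (hβ : 0 < β) :
    ∫ x in Ioo (0 : ℝ) 1, x ^ (α - 1) * (1 - x) ^ (β - 1) = ProbabilityTheory.beta α β := by
  rw [ProbabilityTheory.beta_eq_betaIntegralReal α β hα hβ, Complex.betaIntegral,
    intervalIntegral.integral_of_le zero_le_one, ← integral_Ioc_eq_integral_Ioo,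
    ← RCLike.re_to_complex, ← integral_re]
  · refine setIntegral_congr_fun measurableSet_Ioc fun x ⟨hx0, hx1⟩ ↦ ?_
    norm_cast
    rw [← Complex.ofReal_cpow hx0.le, ← Complex.ofReal_cpow (sub_nonneg.2 hx1),
      RCLike.re_to_complex, ← Complex.ofReal_mul, Complex.ofReal_re]
  · rw [← IntegrableOn, ← intervalIntegrable_iff_integrableOn_Ioc_of_le zero_le_one]
    exact Complex.betaIntegral_convergent (by simpa) (by simpa)

lemma Gamma_one_fourth_mul_Gamma_three_fourths : Gamma (1 / 4) * Gamma (3 / 4) = √2 * π := by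
  have h := Gamma_mul_Gamma_one_sub (1 / 4)
  rw [show (1 : ℝ) - 1 / 4 = 3 / 4 by norm_num, show π * (1 / 4) = π / 4 by ring,
    sin_pi_div_four] at h
  rw [h]
  field_simp
  rw [sq_sqrt zero_le_two]

lemma beta_three_fourths_one_half :
    ProbabilityTheory.beta (3 / 4) (1 / 2) = 4 * (√2 * π ^ ((3 : ℝ) / 2) / Gamma (1 / 4) ^ 2) := by
  have hΓ : Gamma (1 / 4) ≠ 0 := (Gamma_pos_of_pos (by norm_num)).ne'
  have hΓ_five_fourths : Gamma (3 / 4 + 1 / 2) = Gamma (1 / 4) / 4 := by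
    rw [show (3 / 4 + 1 / 2 : ℝ) = 1 / 4 + 1 by norm_num, Gamma_add_one (by norm_num)]
    ring
  have hπ : π ^ ((3 : ℝ) / 2) = π * √π := by
    rw [show (3 : ℝ) / 2 = 1 + 1 / 2 by norm_num, rpow_add pi_pos, rpow_one, ← sqrt_eq_rpow]
  rw [ProbabilityTheory.beta, hΓ_five_fourths, Gamma_one_half_eq, hπ, ← mul_assoc,
    ← Gamma_one_fourth_mul_Gamma_three_fourths]
  field_simp

section

variable {y : ℝ}

lemma pow_four_sub_one_pos (hy : 1 < y) : 0 < y ^ 4 - 1 :=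
  sub_pos.2 (one_lt_pow₀ hy four_ne_zero)

lemma sqrt_pow_four_sub_one_le_sq (y : ℝ) : √(y ^ 4 - 1) ≤ y ^ 2 := by
  rw [show y ^ 4 = (y ^ 2) ^ 2 by ring]
  exact (sqrt_le_sqrt (sub_le_self _ zero_le_one)).trans_eq (sqrt_sq (sq_nonneg y))

lemma sq_sub_one_le_sqrt_pow_four_sub_one (hy : 1 ≤ y) : y ^ 2 - 1 ≤ √(y ^ 4 - 1) :=
  le_sqrt_of_sq_le (by nlinarith [one_le_pow₀ (n := 2) hy])

lemma sq_div_sqrt_pow_four_sub_one_sub_one_nonneg (hy : 1 < y) :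
    0 ≤ y ^ 2 / √(y ^ 4 - 1) - 1 :=
  sub_nonneg.2 <| (one_le_div (sqrt_pos.2 (pow_four_sub_one_pos hy))).2
    (sqrt_pow_four_sub_one_le_sq y)

lemma hasDerivAt_sqrt_pow_four_sub_one_div_sub_self (hy : 1 < y) :
    HasDerivAt (fun y ↦ √(y ^ 4 - 1) / y - y)
      ((y ^ 2 / √(y ^ 4 - 1) - 1) + 1 / (y ^ 2 * √(y ^ 4 - 1))) y := by
  have hy0 : y ≠ 0 := by positivity
  have h4 := pow_four_sub_one_pos hy
  have hs : 0 < √(y ^ 4 - 1) := sqrt_pos.2 h4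
  have hsq : √(y ^ 4 - 1) ^ 2 = y ^ 4 - 1 := sq_sqrt h4.le
  have hsqrt : HasDerivAt (fun y ↦ √(y ^ 4 - 1)) (4 * y ^ 3 / (2 * √(y ^ 4 - 1))) y := by
    simpa using ((hasDerivAt_pow 4 y).sub_const 1).sqrt h4.ne'
  refine ((hsqrt.div (hasDerivAt_id' y) hy0).sub (hasDerivAt_id' y)).congr_deriv ?_
  field_simp
  linear_combination (-2) * hsq

lemma tendsto_sqrt_pow_four_sub_one_div_sub_self_atTop :
    Tendsto (fun y ↦ √(y ^ 4 - 1) / y - y) atTop (𝓝 0) := by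
  have hbound : ∀ᶠ y in atTop, -y⁻¹ ≤ √(y ^ 4 - 1) / y - y ∧ √(y ^ 4 - 1) / y - y ≤ 0 := by
    filter_upwards [eventually_ge_atTop 1] with y hy
    have hy0 : 0 < y := by positivity
    constructor
    · rw [le_sub_iff_add_le, le_div_iff₀ hy0]
      have := sq_sub_one_le_sqrt_pow_four_sub_one hy
      field_simp
      nlinarith
    · rw [sub_nonpos, div_le_iff₀ hy0]
      nlinarith [sqrt_pow_four_sub_one_le_sq y]
  have hlow : Tendsto (fun y : ℝ ↦ -y⁻¹) atTop (𝓝 0) := by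
    simpa using (tendsto_inv_atTop_zero (𝕜 := ℝ)).neg
  exact tendsto_of_tendsto_of_tendsto_of_le_of_le' hlow tendsto_const_nhds
    (hbound.mono fun _ h ↦ h.1) (hbound.mono fun _ h ↦ h.2)

lemma integrableOn_and_integral_deriv_sqrt_pow_four_sub_one_div_sub_self :
    IntegrableOn (fun y ↦ (y ^ 2 / √(y ^ 4 - 1) - 1) + 1 / (y ^ 2 * √(y ^ 4 - 1))) (Ioi 1) ∧
      ∫ y in Ioi (1 : ℝ), ((y ^ 2 / √(y ^ 4 - 1) - 1) + 1 / (y ^ 2 * √(y ^ 4 - 1))) = 1 := by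
  have hcont : ContinuousWithinAt (fun y : ℝ ↦ √(y ^ 4 - 1) / y - y) (Ici 1) 1 :=
    (ContinuousAt.sub (by fun_prop (disch := norm_num)) continuousAt_id).continuousWithinAt
  have hderiv := fun y (hy : y ∈ Ioi (1 : ℝ)) ↦ hasDerivAt_sqrt_pow_four_sub_one_div_sub_self hy
  have hnonneg : ∀ y ∈ Ioi (1 : ℝ),
      0 ≤ (y ^ 2 / √(y ^ 4 - 1) - 1) + 1 / (y ^ 2 * √(y ^ 4 - 1)) := fun y hy ↦
    add_nonneg (sq_div_sqrt_pow_four_sub_one_sub_one_nonneg hy) (by positivity)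
  refine ⟨integrableOn_Ioi_deriv_of_nonneg hcont hderiv hnonneg
    tendsto_sqrt_pow_four_sub_one_div_sub_self_atTop, ?_⟩
  rw [integral_Ioi_of_hasDerivAt_of_nonneg hcont hderiv hnonneg
    tendsto_sqrt_pow_four_sub_one_div_sub_self_atTop]
  norm_num

lemma image_inv_pow_four_Ioi_one : (fun y : ℝ ↦ (y ^ 4)⁻¹) '' Ioi 1 = Ioo 0 1 := by
  ext x
  constructor
  · rintro ⟨y, hy : 1 < y, rfl⟩
    exact ⟨by have := zero_lt_one.trans hy; positivity,
      inv_lt_one_of_one_lt₀ (one_lt_pow₀ hy four_ne_zero)⟩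
  · rintro ⟨hx0, hx1⟩
    refine ⟨x ^ (-(1 / 4) : ℝ), one_lt_rpow_of_pos_of_lt_one_of_neg hx0 hx1 (by norm_num), ?_⟩
    dsimp only
    rw [← rpow_natCast, ← rpow_mul hx0.le]
    norm_num [rpow_neg_one]

lemma integral_Ioi_one_one_div_sq_mul_sqrt_pow_four_sub_one :
    ∫ y in Ioi (1 : ℝ), 1 / (y ^ 2 * √(y ^ 4 - 1)) =
      ProbabilityTheory.beta (3 / 4) (1 / 2) / 4 := by
  have hderiv : ∀ y ∈ Ioi (1 : ℝ),
      HasDerivWithinAt (fun y : ℝ ↦ (y ^ 4)⁻¹) (-(4 * y ^ 3) / (y ^ 4) ^ 2) (Ioi 1) y := by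
    intro y hy
    have hy0 : y ≠ 0 := (zero_lt_one.trans hy).ne'
    have := ((hasDerivAt_pow 4 y).inv (pow_ne_zero 4 hy0)).hasDerivWithinAt (s := Ioi 1)
    simp only [Nat.cast_ofNat] at this
    exact this
  have hinj : InjOn (fun y : ℝ ↦ (y ^ 4)⁻¹) (Ioi 1) := fun a ha b hb h ↦
    (pow_left_strictMonoOn₀ four_ne_zero).injOn (zero_lt_one.trans ha).le
      (zero_lt_one.trans hb).le (inv_injective h)
  rw [← integral_Ioo_rpow_mul_one_sub_rpow (by norm_num) (by norm_num),
    ← image_inv_pow_four_Ioi_one,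
    integral_image_eq_integral_abs_deriv_smul measurableSet_Ioi hderiv hinj,
    eq_div_iff four_ne_zero, ← integral_mul_const]
  refine setIntegral_congr_fun measurableSet_Ioi fun y (hy : 1 < y) ↦ ?_
  have hy0 : 0 < y := zero_lt_one.trans hy
  have h4 := pow_four_sub_one_pos hy
  have hx : ((y ^ 4)⁻¹) ^ ((3 / 4 : ℝ) - 1) = y := by
    rw [inv_rpow (by positivity), ← rpow_natCast, ← rpow_mul hy0.le, ← rpow_neg hy0.le]
    norm_num
  have hx' : (1 - (y ^ 4)⁻¹) ^ ((1 / 2 : ℝ) - 1) = y ^ 2 / √(y ^ 4 - 1) := by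
    rw [show (1 - (y ^ 4)⁻¹ : ℝ) = (y ^ 4 - 1) / (y ^ 2) ^ 2 by field_simp,
      show (1 / 2 : ℝ) - 1 = -(1 / 2) by norm_num, rpow_neg (by positivity), ← sqrt_eq_rpow,
      sqrt_div h4.le, sqrt_sq (by positivity), inv_div]
  rw [smul_eq_mul, hx, hx', abs_div, abs_neg, abs_of_pos (by positivity),
    abs_of_pos (by positivity)]
  field_simp

end

/-- The improper integral `∫_{1}^{∞} ( y²/√(y⁴ − 1) − 1 ) dy` converges, and this integral
minus `1` equals `− √2·π^{3/2} / Γ(1/4)²`. -/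
theorem adS5_wilson_loop_energy_integral :
    IntegrableOn (fun y : ℝ => y ^ 2 / Real.sqrt (y ^ 4 - 1) - 1) (Ioi 1) ∧
    (∫ y in Ioi (1 : ℝ), (y ^ 2 / Real.sqrt (y ^ 4 - 1) - 1)) - 1 =
      -(Real.sqrt 2 * Real.pi ^ ((3 : ℝ) / 2) / (Real.Gamma (1 / 4)) ^ 2) := by
  obtain ⟨hsum_int, hsum⟩ := integrableOn_and_integral_deriv_sqrt_pow_four_sub_one_div_sub_self
  have hf0 : ∀ y ∈ Ioi (1 : ℝ), 0 ≤ y ^ 2 / √(y ^ 4 - 1) - 1 :=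
    fun _ hy ↦ sq_div_sqrt_pow_four_sub_one_sub_one_nonneg hy
  have hg0 : ∀ y ∈ Ioi (1 : ℝ), 0 ≤ 1 / (y ^ 2 * √(y ^ 4 - 1)) := fun _ _ ↦ by positivity
  have hf : IntegrableOn (fun y : ℝ ↦ y ^ 2 / √(y ^ 4 - 1) - 1) (Ioi 1) :=
    IntegrableOn.of_add_of_nonneg measurableSet_Ioi hsum_int
      (Measurable.aestronglyMeasurable (by fun_prop)) hf0 hg0
  have hg : IntegrableOn (fun y : ℝ ↦ 1 / (y ^ 2 * √(y ^ 4 - 1))) (Ioi 1) := by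
    refine IntegrableOn.of_add_of_nonneg measurableSet_Ioi ?_
      (Measurable.aestronglyMeasurable (by fun_prop)) hg0 hf0
    simpa only [add_comm] using hsum_int
  refine ⟨hf, ?_⟩
  rw [integral_add hf hg, integral_Ioi_one_one_div_sq_mul_sqrt_pow_four_sub_one,
    beta_three_fourths_one_half] at hsum
  linarith
end

section
/- Let f, g : ℝ → ℝ be continuous with g(y) > 0 and f(y) > 0 for all y, let u : ℝ → ℝ be differentiable, and let c be a constant such that f(u(x))² / √( f(u(x))² + g(u(x))²·u′(x)² ) − f(u(x)) = c for all x. If u′(x₀) = 0 for some x₀, then c = 0, u′(x) = 0 for every x, and the Lagrangian density √( f(u(x))² + g(u(x))²·u′(x)² ) − f(u(x)) vanishes identically; in particular the corresponding action ∫ [ √( f(u)² + g(u)²·u′² ) − f(u) ] dx is zero. -/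
open Real intervalIntegral

/-- For the string with Wess–Zumino term `B = f` (e.g. the `SL(2,ℝ)` WZW model): if the
first integral `f(u)²/√(f(u)² + g(u)²u′²) − f(u) = c` holds and the profile `u` has a
stationary point, then `c = 0`, `u′ ≡ 0`, the Lagrangian density vanishes identically,
and the corresponding action is zero. -/
theorem wzw_bps_string_zero_action (f g u : ℝ → ℝ) (c : ℝ)
    (hf : Continuous f) (hg : Continuous g)
    (hfpos : ∀ y, 0 < f y) (hgpos : ∀ y, 0 < g y)
    (hu : Differentiable ℝ u)
    (hconst : ∀ x,
      (f (u x)) ^ 2 / Real.sqrt ((f (u x)) ^ 2 + (g (u x)) ^ 2 * (deriv u x) ^ 2)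
        - f (u x) = c)
    (x₀ : ℝ) (hx₀ : deriv u x₀ = 0) :
    c = 0 ∧ (∀ x, deriv u x = 0) ∧
    (∀ x, Real.sqrt ((f (u x)) ^ 2 + (g (u x)) ^ 2 * (deriv u x) ^ 2) - f (u x) = 0) ∧
    (∀ a b : ℝ, (∫ x in a..b,
      (Real.sqrt ((f (u x)) ^ 2 + (g (u x)) ^ 2 * (deriv u x) ^ 2) - f (u x))) = 0) := by
  have hc : c = 0 := by
    have h := hconst x₀
    rw [hx₀] at h
    have hf0 : 0 < f (u x₀) := hfpos _
    rw [show (f (u x₀)) ^ 2 + (g (u x₀)) ^ 2 * (0:ℝ) ^ 2 = (f (u x₀)) ^ 2 by ring,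
      Real.sqrt_sq hf0.le] at h
    field_simp at h
    have : c * f (u x₀) = 0 := by nlinarith
    rcases mul_eq_zero.mp this with h' | h'
    · exact h'
    · exact absurd h' hf0.ne'
  have hderiv : ∀ x, deriv u x = 0 := by
    intro x
    have h := hconst x
    rw [hc] at h
    set S := Real.sqrt ((f (u x)) ^ 2 + (g (u x)) ^ 2 * (deriv u x) ^ 2) with hS
    have hf0 : 0 < f (u x) := hfpos _
    have hpos : 0 < (f (u x)) ^ 2 + (g (u x)) ^ 2 * (deriv u x) ^ 2 := by positivity
    have hSpos : 0 < S := Real.sqrt_pos.mpr hpos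
    have h1 : (f (u x)) ^ 2 = f (u x) * S := by
      field_simp at h; linarith
    have h2 : S = f (u x) := by
      have := mul_left_cancel₀ hf0.ne' (by linarith [h1] : f (u x) * S = f (u x) * f (u x))
      linarith
    have h3 : S ^ 2 = (f (u x)) ^ 2 + (g (u x)) ^ 2 * (deriv u x) ^ 2 :=
      Real.sq_sqrt hpos.le
    rw [h2] at h3
    have h4 : (g (u x)) ^ 2 * (deriv u x) ^ 2 = 0 := by linarith
    have hg0 : (0:ℝ) < g (u x) := hgpos _
    have : (deriv u x) ^ 2 = 0 := by
      rcases mul_eq_zero.mp h4 with h | h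
      · exact absurd h (by positivity)
      · exact h
    exact pow_eq_zero_iff (by norm_num) |>.mp this
  have hlag : ∀ x, Real.sqrt ((f (u x)) ^ 2 + (g (u x)) ^ 2 * (deriv u x) ^ 2) - f (u x) = 0 := by
    intro x
    rw [hderiv x]
    rw [show (f (u x)) ^ 2 + (g (u x)) ^ 2 * (0:ℝ) ^ 2 = (f (u x)) ^ 2 by ring,
      Real.sqrt_sq (hfpos _).le]
    ring
  refine ⟨hc, hderiv, hlag, fun a b => ?_⟩
  simp [hlag]
end

section
/- Let s₀ > 0 and let f : [s₀, ∞) → ℝ be continuously differentiable with f(s₀) > 0 and f′(s) > 0 for all s ≥ s₀, and let g : [s₀, ∞) → ℝ be continuous, nonnegative, and bounded on a neighborhood of s₀. If ∫_{s₀}^{∞} g(s)/f(s)² ds < ∞, then both improper integrals ∫_{s₀}^{∞} ( g(s)/f(s) )·f(s₀)/√( f(s)² − f(s₀)² ) ds and ∫_{s₀}^{∞} ( g(s)/f(s) )·( f(s) − √( f(s)² − f(s₀)² ) ) ds converge. -/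
/-!
Since `f' > 0`, `f` increases, so `f > f(s₀) > 0` on `(s₀, ∞)`. On `[s₀, s₀ + 1]` the mean value
theorem with `c = min f' > 0` gives `f(s)² - f(s₀)² ≥ 2 f(s₀) c (s - s₀)`, and `g` is bounded
there by compactness, so the first integrand is `O((s - s₀)^(-1/2))`. Beyond `s₀ + 1` the factor
`f / √(f² - f(s₀)²)`, decreasing in `f`, is bounded, so the first integrand is dominated by a
multiple of `g / f²`. The second is dominated by `f(s₀)² g / f²` everywhere, because
`f - √(f² - f(s₀)²) = f(s₀)² / (f + √(f² - f(s₀)²))`.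
-/

open MeasureTheory Real Set

theorem sqrt_sq_sub_sq_le {a t : ℝ} (ht : 0 ≤ t) : √(t ^ 2 - a ^ 2) ≤ t := by
  rw [sqrt_le_left ht]
  linarith [sq_nonneg a]

theorem sub_sqrt_sq_sub_sq_le {a t : ℝ} (ht : 0 < t) (hat : a ^ 2 ≤ t ^ 2) :
    t - √(t ^ 2 - a ^ 2) ≤ a ^ 2 / t := by
  have hsq : √(t ^ 2 - a ^ 2) ^ 2 = t ^ 2 - a ^ 2 := sq_sqrt (sub_nonneg.2 hat)
  have hle : √(t ^ 2 - a ^ 2) ≤ t := sqrt_sq_sub_sq_le ht.le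
  rw [le_div_iff₀ ht]
  nlinarith [mul_le_mul_of_nonneg_left hle (sqrt_nonneg (t ^ 2 - a ^ 2))]

theorem div_sqrt_sq_sub_sq_le {a b t : ℝ} (hb : 0 < b) (hab : a ^ 2 < b ^ 2) (hbt : b ≤ t) :
    t / √(t ^ 2 - a ^ 2) ≤ b / √(b ^ 2 - a ^ 2) := by
  have ht : 0 < t := hb.trans_le hbt
  have hbt' : b ^ 2 ≤ t ^ 2 := pow_le_pow_left₀ hb.le hbt 2
  rw [div_le_div_iff₀ (sqrt_pos.2 (by linarith)) (sqrt_pos.2 (by linarith)),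
    ← sqrt_sq ht.le, ← sqrt_sq hb.le, ← sqrt_mul (sq_nonneg t), ← sqrt_mul (sq_nonneg b),
    sqrt_sq ht.le, sqrt_sq hb.le]
  exact sqrt_le_sqrt (by nlinarith [mul_le_mul_of_nonneg_left hbt' (sq_nonneg a)])

theorem strictMonoOn_Ici_of_derivWithin_pos {f : ℝ → ℝ} {a : ℝ} (hf : ContinuousOn f (Ici a))
    (hf' : ∀ x ∈ Ioi a, 0 < derivWithin f (Ici a) x) : StrictMonoOn f (Ici a) :=
  strictMonoOn_of_deriv_pos (convex_Ici a) hf fun x hx => by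
    rw [interior_Ici] at hx
    rw [← derivWithin_of_mem_nhds (Ici_mem_nhds (mem_Ioi.1 hx))]
    exact hf' x hx

theorem exists_pos_mul_sub_le_sub_of_derivWithin_pos {f : ℝ → ℝ} {a b : ℝ} (hab : a ≤ b)
    (hf : ContDiffOn ℝ 1 f (Ici a)) (hf' : ∀ x ∈ Icc a b, 0 < derivWithin f (Ici a) x) :
    ∃ c > 0, ∀ s ∈ Icc a b, c * (s - a) ≤ f s - f a := by
  obtain ⟨x₀, hx₀, hmin⟩ := isCompact_Icc.exists_isMinOn (nonempty_Icc.2 hab)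
    ((hf.continuousOn_derivWithin (uniqueDiffOn_Ici a) le_rfl).mono Icc_subset_Ici_self)
  have hderiv : ∀ x ∈ Ioo a b, derivWithin f (Ici a) x₀ ≤ deriv f x := fun x hx => by
    rw [← derivWithin_of_mem_nhds (Ici_mem_nhds hx.1)]
    exact hmin (Ioo_subset_Icc_self hx)
  refine ⟨_, hf' x₀ hx₀, fun s hs => ?_⟩
  refine (convex_Icc a b).mul_sub_le_image_sub_of_le_deriv (hf.continuousOn.mono
    Icc_subset_Ici_self) ?_ (by rwa [interior_Icc]) a (left_mem_Icc.2 hab) s hs hs.1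
  rw [interior_Icc]
  exact fun x hx => (differentiableAt_of_deriv_ne_zero
    ((hf' x₀ hx₀).trans_le (hderiv x hx)).ne').differentiableWithinAt

theorem IntegrableOn.of_norm_le_const_mul {α : Type*} [MeasurableSpace α] {μ : Measure α}
    {s : Set α} {φ ψ : α → ℝ} {C : ℝ} (hs : MeasurableSet s)
    (hφ : IntegrableOn φ s μ) (hψ : AEStronglyMeasurable ψ (μ.restrict s))
    (hle : ∀ x ∈ s, ‖ψ x‖ ≤ C * φ x) : IntegrableOn ψ s μ :=
  (hφ.const_mul C).mono' hψ (ae_restrict_of_forall_mem hs hle)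

theorem integrableOn_Ioc_inv_sqrt_sub (a b : ℝ) :
    IntegrableOn (fun s => (√(s - a))⁻¹) (Ioc a b) := by
  have h := (intervalIntegral.intervalIntegrable_rpow' (r := -(1 / 2)) (by norm_num)
    (a := 0) (b := b - a)).comp_sub_right a
  simp only [zero_add, sub_add_cancel] at h
  refine h.1.congr_fun (fun s hs => ?_) measurableSet_Ioc
  simp only [sqrt_eq_rpow, rpow_neg (sub_nonneg.2 hs.1.le)]

theorem integrableOn_Ioc_div_sqrt {u v : ℝ → ℝ} {a b k M : ℝ} (hk : 0 < k)
    (hcont : ContinuousOn (fun s => u s / √(v s)) (Ioc a b))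
    (hu : ∀ s ∈ Ioc a b, |u s| ≤ M) (hv : ∀ s ∈ Ioc a b, k * (s - a) ≤ v s) :
    IntegrableOn (fun s => u s / √(v s)) (Ioc a b) := by
  refine IntegrableOn.of_norm_le_const_mul (C := M / √k) measurableSet_Ioc
    (integrableOn_Ioc_inv_sqrt_sub a b) (hcont.aestronglyMeasurable measurableSet_Ioc)
    fun s hs => ?_
  have hM : 0 ≤ M := (abs_nonneg _).trans (hu s hs)
  have hpos : 0 < √(k * (s - a)) := sqrt_pos.2 (mul_pos hk (sub_pos.2 hs.1))
  calc ‖u s / √(v s)‖ = |u s| / √(v s) := by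
        rw [norm_div, norm_of_nonneg (sqrt_nonneg _), norm_eq_abs]
    _ ≤ M / √(k * (s - a)) :=
        div_le_div₀ hM (hu s hs) hpos (sqrt_le_sqrt (hv s hs))
    _ = M / √k * (√(s - a))⁻¹ := by rw [sqrt_mul hk.le, div_mul_eq_div_div, div_eq_mul_inv]

noncomputable def distanceIntegrand (f g : ℝ → ℝ) (a s : ℝ) : ℝ :=
  g s / f s * f a / √(f s ^ 2 - f a ^ 2)

noncomputable def energyIntegrand (f g : ℝ → ℝ) (a s : ℝ) : ℝ :=
  g s / f s * (f s - √(f s ^ 2 - f a ^ 2))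

section Integrands

variable {f g : ℝ → ℝ} {a b : ℝ}

theorem continuousOn_distanceIntegrand (hf : ContinuousOn f (Ici a))
    (hg : ContinuousOn g (Ici a)) (hmono : StrictMonoOn f (Ici a)) (hfa : 0 < f a) :
    ContinuousOn (distanceIntegrand f g a) (Ioi a) := by
  have hlt : ∀ s ∈ Ioi a, f a < f s := fun s hs => hmono self_mem_Ici (mem_Ici.2 hs.le) hs
  have hfc : ContinuousOn f (Ioi a) := hf.mono Ioi_subset_Ici_self
  have hgc : ContinuousOn g (Ioi a) := hg.mono Ioi_subset_Ici_self
  have hfne : ∀ s ∈ Ioi a, f s ≠ 0 := fun s hs => (hfa.trans (hlt s hs)).ne'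
  have hsqrtne : ∀ s ∈ Ioi a, √(f s ^ 2 - f a ^ 2) ≠ 0 := fun s hs =>
    (sqrt_pos.2 (sub_pos.2 (pow_lt_pow_left₀ (hlt s hs) hfa.le two_ne_zero))).ne'
  unfold distanceIntegrand
  fun_prop (disch := assumption)

theorem continuousOn_energyIntegrand (hf : ContinuousOn f (Ici a))
    (hg : ContinuousOn g (Ici a)) (hmono : StrictMonoOn f (Ici a)) (hfa : 0 < f a) :
    ContinuousOn (energyIntegrand f g a) (Ioi a) := by
  have hfc : ContinuousOn f (Ioi a) := hf.mono Ioi_subset_Ici_self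
  have hgc : ContinuousOn g (Ioi a) := hg.mono Ioi_subset_Ici_self
  have hfne : ∀ s ∈ Ioi a, f s ≠ 0 := fun s hs =>
    (hfa.trans (hmono self_mem_Ici (mem_Ici.2 hs.le) hs)).ne'
  unfold energyIntegrand
  fun_prop (disch := assumption)

theorem norm_energyIntegrand_le (hmono : StrictMonoOn f (Ici a)) (hfa : 0 < f a)
    (hg0 : ∀ s ∈ Ici a, 0 ≤ g s) {s : ℝ} (hs : a < s) :
    ‖energyIntegrand f g a s‖ ≤ f a ^ 2 * (g s / f s ^ 2) := by
  have hlt : f a < f s := hmono self_mem_Ici (mem_Ici.2 hs.le) hs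
  have hfs : 0 < f s := hfa.trans hlt
  have hgf : 0 ≤ g s / f s := div_nonneg (hg0 s (mem_Ici.2 hs.le)) hfs.le
  calc ‖energyIntegrand f g a s‖ = g s / f s * (f s - √(f s ^ 2 - f a ^ 2)) :=
        norm_of_nonneg (mul_nonneg hgf (sub_nonneg.2 (sqrt_sq_sub_sq_le hfs.le)))
    _ ≤ g s / f s * (f a ^ 2 / f s) :=
        mul_le_mul_of_nonneg_left
          (sub_sqrt_sq_sub_sq_le hfs (pow_le_pow_left₀ hfa.le hlt.le 2)) hgf
    _ = f a ^ 2 * (g s / f s ^ 2) := by ring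

theorem norm_distanceIntegrand_le (hmono : StrictMonoOn f (Ici a)) (hfa : 0 < f a)
    (hg0 : ∀ s ∈ Ici a, 0 ≤ g s) (hab : a < b) {s : ℝ} (hs : b < s) :
    ‖distanceIntegrand f g a s‖ ≤ f a * (f b / √(f b ^ 2 - f a ^ 2)) * (g s / f s ^ 2) := by
  have has : a < s := hab.trans hs
  have hfab : f a < f b := hmono self_mem_Ici (mem_Ici.2 hab.le) hab
  have hfs : 0 < f s := hfa.trans (hmono self_mem_Ici (mem_Ici.2 has.le) has)
  have hgs : 0 ≤ g s := hg0 s (mem_Ici.2 has.le)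
  calc ‖distanceIntegrand f g a s‖ = g s / f s ^ 2 * f a * (f s / √(f s ^ 2 - f a ^ 2)) := by
        rw [distanceIntegrand, norm_of_nonneg (by positivity)]
        field_simp
    _ ≤ g s / f s ^ 2 * f a * (f b / √(f b ^ 2 - f a ^ 2)) :=
        mul_le_mul_of_nonneg_left
          (div_sqrt_sq_sub_sq_le (hfa.trans hfab) (pow_lt_pow_left₀ hfab hfa.le two_ne_zero)
            (hmono.monotoneOn (mem_Ici.2 hab.le) (mem_Ici.2 has.le) hs.le))
          (by positivity)
    _ = f a * (f b / √(f b ^ 2 - f a ^ 2)) * (g s / f s ^ 2) := by ring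

theorem integrableOn_energyIntegrand (hf : ContinuousOn f (Ici a))
    (hg : ContinuousOn g (Ici a)) (hmono : StrictMonoOn f (Ici a)) (hfa : 0 < f a)
    (hg0 : ∀ s ∈ Ici a, 0 ≤ g s) (hint : IntegrableOn (fun s => g s / f s ^ 2) (Ioi a)) :
    IntegrableOn (energyIntegrand f g a) (Ioi a) :=
  IntegrableOn.of_norm_le_const_mul measurableSet_Ioi hint
    ((continuousOn_energyIntegrand hf hg hmono hfa).aestronglyMeasurable measurableSet_Ioi)
    fun _ hs => norm_energyIntegrand_le hmono hfa hg0 hs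

theorem integrableOn_Ioi_distanceIntegrand (hf : ContinuousOn f (Ici a))
    (hg : ContinuousOn g (Ici a)) (hmono : StrictMonoOn f (Ici a)) (hfa : 0 < f a)
    (hg0 : ∀ s ∈ Ici a, 0 ≤ g s) (hab : a < b)
    (hint : IntegrableOn (fun s => g s / f s ^ 2) (Ioi a)) :
    IntegrableOn (distanceIntegrand f g a) (Ioi b) :=
  IntegrableOn.of_norm_le_const_mul measurableSet_Ioi (hint.mono_set (Ioi_subset_Ioi hab.le))
    (((continuousOn_distanceIntegrand hf hg hmono hfa).mono
      (Ioi_subset_Ioi hab.le)).aestronglyMeasurable measurableSet_Ioi)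
    fun _ hs => norm_distanceIntegrand_le hmono hfa hg0 hab hs

theorem integrableOn_Ioc_distanceIntegrand (hf : ContinuousOn f (Ici a))
    (hg : ContinuousOn g (Ici a)) (hmono : StrictMonoOn f (Ici a)) (hfa : 0 < f a)
    (hg0 : ∀ s ∈ Ici a, 0 ≤ g s) {c : ℝ} (hc : 0 < c)
    (hlin : ∀ s ∈ Ioc a b, c * (s - a) ≤ f s - f a) :
    IntegrableOn (distanceIntegrand f g a) (Ioc a b) := by
  obtain ⟨M, hM⟩ := isCompact_Icc.exists_bound_of_continuousOn
    (hg.mono Icc_subset_Ici_self : ContinuousOn g (Icc a b))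
  refine integrableOn_Ioc_div_sqrt (k := 2 * f a * c) (M := M) (by positivity)
    ((continuousOn_distanceIntegrand hf hg hmono hfa).mono Ioc_subset_Ioi_self)
    (fun s hs => ?_) fun s hs => ?_
  all_goals have hlt : f a < f s := hmono self_mem_Ici (mem_Ici.2 hs.1.le) hs.1
  · have hgf : 0 ≤ g s / f s := div_nonneg (hg0 s (mem_Ici.2 hs.1.le)) (hfa.trans hlt).le
    calc |g s / f s * f a| = g s / f s * f a := abs_of_nonneg (mul_nonneg hgf hfa.le)
      _ ≤ g s / f s * f s := mul_le_mul_of_nonneg_left hlt.le hgf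
      _ = g s := div_mul_cancel₀ _ (hfa.trans hlt).ne'
      _ ≤ M := (le_abs_self _).trans (hM s (Ioc_subset_Icc_self hs))
  · have hsum : 2 * f a ≤ f s + f a := by linarith
    nlinarith [mul_le_mul (hlin s hs) hsum (by positivity) (by linarith)]

end Integrands

theorem kss_integrals_converge_general (s₀ : ℝ) (f g : ℝ → ℝ)
    (hf : ContDiffOn ℝ 1 f (Ici s₀)) (hf₀ : 0 < f s₀)
    (hf' : ∀ s ∈ Ici s₀, 0 < derivWithin f (Ici s₀) s)
    (hg : ContinuousOn g (Ici s₀)) (hg0 : ∀ s ∈ Ici s₀, 0 ≤ g s)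
    (hint : IntegrableOn (fun s => g s / (f s) ^ 2) (Ioi s₀)) :
    IntegrableOn (fun s => (g s / f s) * f s₀ / Real.sqrt ((f s) ^ 2 - (f s₀) ^ 2))
        (Ioi s₀) ∧
    IntegrableOn (fun s => (g s / f s) * (f s - Real.sqrt ((f s) ^ 2 - (f s₀) ^ 2)))
        (Ioi s₀) := by
  have hmono : StrictMonoOn f (Ici s₀) :=
    strictMonoOn_Ici_of_derivWithin_pos hf.continuousOn fun s hs => hf' s (mem_Ici.2 hs.le)
  have hT : s₀ < s₀ + 1 := lt_add_one s₀
  obtain ⟨c, hc, hlin⟩ := exists_pos_mul_sub_le_sub_of_derivWithin_pos hT.le hf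
    fun x hx => hf' x hx.1
  have hnear := integrableOn_Ioc_distanceIntegrand hf.continuousOn hg hmono hf₀ hg0 hc
    fun s hs => hlin s (Ioc_subset_Icc_self hs)
  have htail := integrableOn_Ioi_distanceIntegrand hf.continuousOn hg hmono hf₀ hg0 hT hint
  refine ⟨?_, integrableOn_energyIntegrand hf.continuousOn hg hmono hf₀ hg0 hint⟩
  rw [← Ioc_union_Ioi_eq_Ioi hT.le]
  exact hnear.union htail

/-- Convergence of the Kinar–Schreiber–Sonnenschein integrals: if `f` is `C¹` on `[s₀,∞)`
with `f(s₀) > 0` and increasing derivative-positivity, `g` is continuous, nonnegative and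
bounded near `s₀`, and `∫_{s₀}^{∞} g/f² < ∞`, then the interquark-distance integrand
`(g/f)·f(s₀)/√(f² − f(s₀)²)` and the energy integrand `(g/f)·( f − √(f² − f(s₀)²) )`
are both integrable on `(s₀, ∞)`. -/
theorem kss_integrals_converge (s₀ : ℝ) (hs₀ : 0 < s₀) (f g : ℝ → ℝ)
    (hf : ContDiffOn ℝ 1 f (Ici s₀)) (hf₀ : 0 < f s₀)
    (hf' : ∀ s ∈ Ici s₀, 0 < derivWithin f (Ici s₀) s)
    (hg : ContinuousOn g (Ici s₀)) (hg0 : ∀ s ∈ Ici s₀, 0 ≤ g s)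
    (hgbdd : ∃ M : ℝ, ∀ᶠ s in nhdsWithin s₀ (Ici s₀), |g s| ≤ M)
    (hint : IntegrableOn (fun s => g s / (f s) ^ 2) (Ioi s₀)) :
    IntegrableOn (fun s => (g s / f s) * f s₀ / Real.sqrt ((f s) ^ 2 - (f s₀) ^ 2))
        (Ioi s₀) ∧
    IntegrableOn (fun s => (g s / f s) * (f s - Real.sqrt ((f s) ^ 2 - (f s₀) ^ 2)))
        (Ioi s₀) :=
  kss_integrals_converge_general s₀ f g hf hf₀ hf' hg hg0 hint
end

section
/- Let p be a natural number with p < 5, and set k = (7−p)/2. For a > 0 let f(s) = a·s^k and g(s) = 1, and define L(s₀) and E(s₀) by L(s₀) = 2∫_{s₀}^{∞} (g(s)/f(s))·f(s₀)/√(f(s)² − f(s₀)²) ds and E(s₀) = f(s₀)·L(s₀) + 2∫_{s₀}^{∞} (g(s)/f(s))·( √(f(s)² − f(s₀)²) − f(s) ) ds − 2∫_{0}^{s₀} g(s) ds. Then there exists a constant C_p > 0, depending only on p, such that for every a > 0 and every s₀ > 0: E(s₀) = − C_p · a^{−2/(5−p)} · L(s₀)^{−2/(5−p)}. In particular, with a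 = (g²_{YM}·d_p·N)^{−1/2} this gives the quark–antiquark potential E ∝ − ( g²_{YM} N / L² )^{1/(5−p)} of the (p+1)-dimensional maximally supersymmetric Yang–Mills theory. -/
/-!
Substituting `s = s₀ t` writes both integrals as `s₀`-multiples of universal integrals over
`t > 1`: with `φ = lengthDensity k` and `ψ = energyDensity k` one gets
`L = 2 J s₀^(1-k) / a` for `J = ∫ φ`, and `E = 2 s₀ J + 2 s₀ ∫ ψ - 2 s₀`.
Since `(t ψ(t))' = ψ + k φ`, `ψ(1) = -1` and `t ψ(t) → 0`, integration by parts gives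
`∫ ψ = 1 - k J`, so `E = -2 (k - 1) J s₀`. Eliminating `s₀` through `L` yields the power law,
the exponent `-1/(k-1) = -2/(5-p)` being forced by `L ∝ s₀^(1-k)`.
-/

open MeasureTheory Real Set Filter Topology

noncomputable def lengthDensity (k t : ℝ) : ℝ := 1 / (t ^ k * √((t ^ k) ^ 2 - 1))

noncomputable def energyDensity (k t : ℝ) : ℝ := 1 / t ^ k * (√((t ^ k) ^ 2 - 1) - t ^ k)

section UnitIntegrals

variable {k t : ℝ}

lemma rpow_sq_eq_rpow_two_mul (ht : 0 ≤ t) (k : ℝ) : (t ^ k) ^ 2 = t ^ (2 * k) := by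
  rw [← rpow_natCast, ← rpow_mul ht, mul_comm]
  norm_num

lemma sq_rpow_sub_one_pos (hk : 0 < k) (ht : 1 < t) : 0 < (t ^ k) ^ 2 - 1 := by
  have := one_lt_rpow ht hk
  nlinarith

lemma le_sq_rpow (hk : 1 / 2 ≤ k) (ht : 1 ≤ t) : t ≤ (t ^ k) ^ 2 := by
  rw [rpow_sq_eq_rpow_two_mul (by linarith) k]
  simpa using rpow_le_rpow_of_exponent_le ht (by linarith : (1 : ℝ) ≤ 2 * k)

lemma lengthDensity_pos (hk : 0 < k) (ht : 1 < t) : 0 < lengthDensity k t := by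
  have := one_lt_rpow ht hk
  have := sqrt_pos.mpr (sq_rpow_sub_one_pos hk ht)
  unfold lengthDensity
  positivity

lemma continuousOn_lengthDensity (hk : 0 < k) : ContinuousOn (lengthDensity k) (Ioi 1) := by
  have hx : Continuous fun t : ℝ => t ^ k := continuous_rpow_const hk.le
  refine continuousOn_const.div (by fun_prop) fun t ht => ?_
  exact (mul_pos (by linarith [one_lt_rpow (mem_Ioi.mp ht) hk])
    (sqrt_pos.mpr (sq_rpow_sub_one_pos hk ht))).ne'

lemma continuousOn_energyDensity (hk : 0 < k) : ContinuousOn (energyDensity k) (Ici 1) := by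
  have hx : Continuous fun t : ℝ => t ^ k := continuous_rpow_const hk.le
  refine (continuousOn_const.div (by fun_prop) fun t ht => ?_).mul (by fun_prop)
  exact (rpow_pos_of_pos (zero_lt_one.trans_le ht) k).ne'

lemma lengthDensity_le_rpow_sub_one (hk : 1 / 2 ≤ k) (ht : 1 < t) :
    lengthDensity k t ≤ (t - 1) ^ (-(1 / 2) : ℝ) := by
  have hx := one_lt_rpow ht (by linarith : 0 < k)
  have hw : √(t - 1) ≤ √((t ^ k) ^ 2 - 1) := sqrt_le_sqrt (by linarith [le_sq_rpow hk ht.le])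
  rw [rpow_neg (by linarith : (0 : ℝ) ≤ t - 1), ← sqrt_eq_rpow, ← one_div, lengthDensity]
  gcongr
  exact hw.trans (le_mul_of_one_le_left (sqrt_nonneg _) hx.le)

lemma lengthDensity_le_rpow (hk : 1 / 2 ≤ k) (ht : 2 ≤ t) :
    lengthDensity k t ≤ 2 * t ^ (-(2 * k)) := by
  have hx := one_lt_rpow (by linarith : 1 < t) (by linarith : 0 < k)
  have hx2 : 2 ≤ (t ^ k) ^ 2 := ht.trans (le_sq_rpow hk (by linarith))
  have hw := sq_sqrt (by linarith : 0 ≤ (t ^ k) ^ 2 - 1)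
  have hw0 := sqrt_pos.mpr (by linarith : 0 < (t ^ k) ^ 2 - 1)
  rw [rpow_neg (by linarith), ← rpow_sq_eq_rpow_two_mul (by linarith), lengthDensity,
    div_le_iff₀ (by positivity)]
  field_simp
  nlinarith

lemma integrableOn_lengthDensity (hk : 1 / 2 < k) : IntegrableOn (lengthDensity k) (Ioi 1) := by
  have hcont := continuousOn_lengthDensity (by linarith : 0 < k)
  rw [← Ioc_union_Ioi_eq_Ioi one_le_two]
  refine IntegrableOn.union ?_ ?_
  · have hbound : IntegrableOn (fun t : ℝ => (t - 1) ^ (-(1 / 2) : ℝ)) (Ioc 1 2) := by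
      have h := (intervalIntegral.intervalIntegrable_rpow' (a := 0) (b := 1)
        (r := (-(1 / 2) : ℝ)) (by norm_num)).comp_sub_right 1
      norm_num at h
      exact (intervalIntegrable_iff_integrableOn_Ioc_of_le one_le_two).mp h
    refine hbound.mono' ((hcont.mono Ioc_subset_Ioi_self).aestronglyMeasurable
      measurableSet_Ioc) ((ae_restrict_iff' measurableSet_Ioc).mpr (ae_of_all _ fun t ht => ?_))
    rw [norm_of_nonneg (lengthDensity_pos (by linarith) ht.1).le]
    exact lengthDensity_le_rpow_sub_one hk.le ht.1
  · have hbound : IntegrableOn (fun t : ℝ => 2 * t ^ (-(2 * k))) (Ioi 2) :=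
      (integrableOn_Ioi_rpow_of_lt (by linarith) two_pos).const_mul _
    refine hbound.mono' ((hcont.mono (Ioi_subset_Ioi one_le_two)).aestronglyMeasurable
      measurableSet_Ioi) ((ae_restrict_iff' measurableSet_Ioi).mpr (ae_of_all _ fun t ht => ?_))
    rw [norm_of_nonneg (lengthDensity_pos (by linarith) (one_lt_two.trans ht)).le]
    exact lengthDensity_le_rpow hk.le ht.le

lemma energyDensity_eq (hk : 0 < k) (ht : 1 < t) :
    energyDensity k t = -1 / (t ^ k * (t ^ k + √((t ^ k) ^ 2 - 1))) := by
  have hw := sq_sqrt (sq_rpow_sub_one_pos hk ht).le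
  rw [energyDensity, eq_div_iff (by positivity)]
  field_simp
  linear_combination hw

lemma norm_energyDensity_le (hk : 0 < k) (ht : 1 < t) :
    ‖energyDensity k t‖ ≤ t ^ (-(2 * k)) := by
  have hx := one_lt_rpow ht hk
  have hw0 := sqrt_nonneg ((t ^ k) ^ 2 - 1)
  rw [energyDensity_eq hk ht, norm_div, norm_neg, norm_one, norm_of_nonneg (by positivity),
    rpow_neg (by linarith), ← rpow_sq_eq_rpow_two_mul (by linarith), inv_eq_one_div]
  exact one_div_le_one_div_of_le (by positivity) (by nlinarith)

lemma integrableOn_energyDensity (hk : 1 / 2 < k) : IntegrableOn (energyDensity k) (Ioi 1) :=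
  (integrableOn_Ioi_rpow_of_lt (by linarith) one_pos).mono'
    (((continuousOn_energyDensity (by linarith)).mono Ioi_subset_Ici_self).aestronglyMeasurable
      measurableSet_Ioi)
    ((ae_restrict_iff' measurableSet_Ioi).mpr
      (ae_of_all _ fun _ ht => norm_energyDensity_le (by linarith) ht))

lemma hasDerivAt_mul_energyDensity (hk : 0 < k) (ht : 1 < t) :
    HasDerivAt (fun t => t * energyDensity k t) (energyDensity k t + k * lengthDensity k t) t := by
  have ht0 : 0 < t := zero_lt_one.trans ht
  have hx0 : 0 < t ^ k := rpow_pos_of_pos ht0 k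
  have hq := sq_rpow_sub_one_pos hk ht
  have hw := sq_sqrt hq.le
  have hx : HasDerivAt (fun t : ℝ => t ^ k) (k * t ^ (k - 1)) t :=
    hasDerivAt_rpow_const (Or.inl ht0.ne')
  have hsqrt := ((hx.fun_pow 2).sub_const 1).sqrt hq.ne'
  have hform : (fun t => t * energyDensity k t)
      = fun t => t * (√((t ^ k) ^ 2 - 1) - t ^ k) / t ^ k := by
    funext s
    rw [energyDensity]
    ring
  rw [hform]
  refine (((hasDerivAt_id' t).fun_mul (hsqrt.fun_sub hx)).fun_div hx hx0.ne').congr_deriv ?_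
  rw [energyDensity, lengthDensity, rpow_sub ht0, rpow_one]
  field_simp
  linear_combination (-2 * k) * hw

lemma tendsto_mul_energyDensity_atTop (hk : 1 / 2 < k) :
    Tendsto (fun t => t * energyDensity k t) atTop (𝓝 0) := by
  refine squeeze_zero_norm' ?_ (tendsto_rpow_neg_atTop (by linarith : 0 < 2 * k - 1))
  filter_upwards [eventually_gt_atTop 1] with t ht
  have ht0 : 0 < t := zero_lt_one.trans ht
  calc ‖t * energyDensity k t‖ = t * ‖energyDensity k t‖ := by
        rw [norm_mul, norm_of_nonneg ht0.le]
    _ ≤ t * t ^ (-(2 * k)) := by gcongr; exact norm_energyDensity_le (by linarith) ht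
    _ = t ^ (-(2 * k - 1)) := by
        rw [show -(2 * k - 1) = 1 + -(2 * k) by ring, rpow_add ht0, rpow_one]

lemma integral_energyDensity (hk : 1 / 2 < k) :
    ∫ t in Ioi 1, energyDensity k t = 1 - k * ∫ t in Ioi 1, lengthDensity k t := by
  have hk0 : 0 < k := by linarith
  have hψ := integrableOn_energyDensity hk
  have hφ := (integrableOn_lengthDensity hk).const_mul k
  have hcont : ContinuousWithinAt (fun t => t * energyDensity k t) (Ici 1) 1 :=
    (continuousOn_id.mul (continuousOn_energyDensity hk0)) 1 self_mem_Ici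
  have hparts := integral_Ioi_of_hasDerivAt_of_tendsto hcont
    (fun t ht => hasDerivAt_mul_energyDensity hk0 ht) (hψ.add hφ)
    (tendsto_mul_energyDensity_atTop hk)
  have hψ1 : energyDensity k 1 = -1 := by simp [energyDensity]
  rw [integral_add hψ hφ, integral_const_mul, hψ1] at hparts
  linarith

lemma integral_lengthDensity_pos (hk : 1 / 2 < k) : 0 < ∫ t in Ioi 1, lengthDensity k t := by
  have hnonneg : 0 ≤ᵐ[volume.restrict (Ioi 1)] lengthDensity k :=
    (ae_restrict_iff' measurableSet_Ioi).mpr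
      (ae_of_all _ fun t ht => (lengthDensity_pos (by linarith) ht).le)
  rw [setIntegral_pos_iff_support_of_nonneg_ae hnonneg (integrableOn_lengthDensity hk)]
  have hsupp : Ioi 1 ⊆ Function.support (lengthDensity k) ∩ Ioi 1 :=
    fun t ht => ⟨(lengthDensity_pos (by linarith) ht).ne', ht⟩
  exact (measure_mono hsupp).trans_lt' (by simp)

end UnitIntegrals

lemma setIntegral_Ioi_eq_smul_setIntegral_Ioi_one {E : Type*} [NormedAddCommGroup E]
    [NormedSpace ℝ E] (G : ℝ → E) {c : ℝ} (hc : 0 < c) :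
    ∫ s in Ioi c, G s = c • ∫ t in Ioi 1, G (c * t) := by
  rw [integral_comp_mul_left_Ioi G 1 hc, mul_one, smul_inv_smul₀ hc.ne']

section Scaling

variable {k a s₀ t : ℝ}

lemma sqrt_sq_mul_rpow_sub_sq (ha : 0 < a) (hs₀ : 0 < s₀) (ht : 0 ≤ t) :
    √((a * (s₀ * t) ^ k) ^ 2 - (a * s₀ ^ k) ^ 2) = a * s₀ ^ k * √((t ^ k) ^ 2 - 1) := by
  rw [mul_rpow hs₀.le ht, show (a * (s₀ ^ k * t ^ k)) ^ 2 - (a * s₀ ^ k) ^ 2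
    = (a * s₀ ^ k) ^ 2 * ((t ^ k) ^ 2 - 1) by ring, sqrt_mul (sq_nonneg _),
    sqrt_sq (by positivity)]

lemma length_integrand_eq (ha : 0 < a) (hs₀ : 0 < s₀) (ht : 0 ≤ t) :
    1 / (a * (s₀ * t) ^ k) * (a * s₀ ^ k) / √((a * (s₀ * t) ^ k) ^ 2 - (a * s₀ ^ k) ^ 2)
      = 1 / (a * s₀ ^ k) * lengthDensity k t := by
  rw [sqrt_sq_mul_rpow_sub_sq ha hs₀ ht, mul_rpow hs₀.le ht, lengthDensity]
  field_simp

lemma energy_integrand_eq (ha : 0 < a) (hs₀ : 0 < s₀) (ht : 0 ≤ t) :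
    1 / (a * (s₀ * t) ^ k) *
        (√((a * (s₀ * t) ^ k) ^ 2 - (a * s₀ ^ k) ^ 2) - a * (s₀ * t) ^ k)
      = energyDensity k t := by
  rw [sqrt_sq_mul_rpow_sub_sq ha hs₀ ht, mul_rpow hs₀.le ht, energyDensity]
  field_simp

lemma integral_length_integrand (ha : 0 < a) (hs₀ : 0 < s₀) :
    ∫ s in Ioi s₀, 1 / (a * s ^ k) * (a * s₀ ^ k) / √((a * s ^ k) ^ 2 - (a * s₀ ^ k) ^ 2)
      = s₀ ^ (1 - k) / a * ∫ t in Ioi 1, lengthDensity k t := by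
  rw [setIntegral_Ioi_eq_smul_setIntegral_Ioi_one _ hs₀, setIntegral_congr_fun measurableSet_Ioi
    fun t ht => length_integrand_eq ha hs₀ (zero_lt_one.trans ht).le, integral_const_mul,
    smul_eq_mul, rpow_sub hs₀, rpow_one]
  field_simp

lemma integral_energy_integrand (ha : 0 < a) (hs₀ : 0 < s₀) :
    ∫ s in Ioi s₀, 1 / (a * s ^ k) * (√((a * s ^ k) ^ 2 - (a * s₀ ^ k) ^ 2) - a * s ^ k)
      = s₀ * ∫ t in Ioi 1, energyDensity k t := by
  rw [setIntegral_Ioi_eq_smul_setIntegral_Ioi_one _ hs₀, setIntegral_congr_fun measurableSet_Ioi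
    fun t ht => energy_integrand_eq ha hs₀ (zero_lt_one.trans ht).le, smul_eq_mul]

end Scaling

lemma rpow_mul_rpow_mul_rpow_one_sub_div {k c a s : ℝ} (hk : k ≠ 1) (hc : 0 < c) (ha : 0 < a)
    (hs : 0 < s) : c ^ (1 / (k - 1)) * a ^ (-1 / (k - 1)) * (c * s ^ (1 - k) / a) ^ (-1 / (k - 1))
      = s := by
  have hk' : k - 1 ≠ 0 := sub_ne_zero.mpr hk
  rw [div_rpow (by positivity) ha.le, mul_rpow hc.le (by positivity), ← rpow_mul hs.le,
    show (1 - k) * (-1 / (k - 1)) = 1 by field_simp; ring, rpow_one,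
    show -1 / (k - 1) = -(1 / (k - 1)) by ring, rpow_neg hc.le, rpow_neg ha.le]
  field_simp

/-- Quark–antiquark potential for the near-horizon `Dp`-brane background (`p < 5`),
`f(s) = a·s^{(7−p)/2}`, `g(s) = 1`: there is a constant `C_p > 0` depending only on `p`
such that the renormalized energy satisfies
`E(s₀) = −C_p · a^{−2/(5−p)} · L(s₀)^{−2/(5−p)}` for all `a > 0`, `s₀ > 0`, i.e. the
potential is `E ∝ −(g²_{YM}N/L²)^{1/(5−p)}`. -/
theorem dp_brane_quark_antiquark_potential (p : ℕ) (hp : p < 5) (k : ℝ)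
    (hk : k = ((7 : ℝ) - p) / 2)
    (L E : ℝ → ℝ → ℝ)
    (hL : ∀ a s₀, L a s₀ = 2 * ∫ s in Ioi s₀,
      ((1 : ℝ) / (a * s ^ k)) * (a * s₀ ^ k) /
        Real.sqrt ((a * s ^ k) ^ 2 - (a * s₀ ^ k) ^ 2))
    (hE : ∀ a s₀, E a s₀ = (a * s₀ ^ k) * L a s₀
      + 2 * (∫ s in Ioi s₀, ((1 : ℝ) / (a * s ^ k)) *
          (Real.sqrt ((a * s ^ k) ^ 2 - (a * s₀ ^ k) ^ 2) - a * s ^ k))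
      - 2 * ∫ _s in Ioo (0 : ℝ) s₀, (1 : ℝ)) :
    ∃ C : ℝ, 0 < C ∧ ∀ a : ℝ, 0 < a → ∀ s₀ : ℝ, 0 < s₀ →
      E a s₀ = -C * a ^ (-(2 : ℝ) / ((5 : ℝ) - p)) *
        L a s₀ ^ (-(2 : ℝ) / ((5 : ℝ) - p)) := by
  have hp4 : (p : ℝ) ≤ 4 := by exact_mod_cast Nat.le_of_lt_succ hp
  have hk1 : 1 < k := by rw [hk]; linarith
  have hexp : -(2 : ℝ) / (5 - p) = -1 / (k - 1) := by rw [hk]; field_simp; ring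
  set J := ∫ t in Ioi 1, lengthDensity k t
  have hJ : 0 < J := integral_lengthDensity_pos (by linarith)
  refine ⟨2 * (k - 1) * J * (2 * J) ^ (1 / (k - 1)), by positivity, fun a ha s₀ hs₀ => ?_⟩
  have hLa : L a s₀ = 2 * J * s₀ ^ (1 - k) / a := by
    rw [hL, integral_length_integrand ha hs₀]
    ring
  have hEa : E a s₀ = -(2 * (k - 1) * J * s₀) := by
    rw [hE, hLa, integral_energy_integrand ha hs₀, integral_energyDensity (by linarith),
      setIntegral_const, volume_real_Ioo_of_le hs₀.le, smul_eq_mul, rpow_sub hs₀, rpow_one]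
    field_simp
    ring
  have hs₀_eq := rpow_mul_rpow_mul_rpow_one_sub_div (c := 2 * J) hk1.ne' (by positivity) ha hs₀
  rw [hEa, hexp, hLa]
  nth_rewrite 1 [← hs₀_eq]
  ring
end

section
/- Let 0 < s₀ < s₁, let f : [s₀, s₁] → ℝ be continuous with f(s) > f(s₀) > 0 for s ∈ (s₀, s₁], and let g : (0, s₁] → ℝ be continuous and nonnegative. Assume the improper integrals ∫_{s₀}^{s₁} g(s)·f(s)/√(f(s)² − f(s₀)²) ds, ∫_{s₀}^{s₁} (g(s)/f(s))·f(s₀)/√(f(s)² − f(s₀)²) ds, and ∫_{0}^{s₀} g(s) ds converge. Then 2∫_{s₀}^{s₁} g(s)·f(s)/√(f(s)² − f(s₀)²) ds − 2∫_{0}^{s₁} g(s) ds = f(s₀)·L(s₀) + 2∫_{s₀}^{s₁} (g(s)/f(s))·( √(f(s)² − f(s₀)²) − f(s) ) ds − 2∫_{0}^{s₀} g(s) ds, where L(s₀) = 2∫_{s₀}^{s₁} (g(s)/f(s))·f(s₀)/√(f(s)² − f(s₀)²) ds. -/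
open MeasureTheory Real Set

/-! Multiplying `f/√(f² − f₀²) = f₀²/(f·√(f² − f₀²)) + (√(f² − f₀²) − f)/f + 1` by `g` splits
the energy integrand into the `f₀·L` integrand, the remainder integrand and `g`. The remainder is
integrable as a difference of integrable functions, so the integral splits accordingly, and the
`∫_{s₀}^{s₁} g` part cancels against the quark-mass integral `∫_0^{s₁} g` split at `s₀`. -/

theorem mul_div_sqrt_sq_sub_sq_eq (c a b : ℝ) (hb : 0 ≤ b) (hab : b < a) :
    c * a / √(a ^ 2 - b ^ 2) =
      b * (c / a * b / √(a ^ 2 - b ^ 2)) + c / a * (√(a ^ 2 - b ^ 2) - a) + c := by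
  have ha : 0 < a := hb.trans_lt hab
  have hpos : 0 < a ^ 2 - b ^ 2 := by nlinarith
  have hsqrt : 0 < √(a ^ 2 - b ^ 2) := Real.sqrt_pos.2 hpos
  have hsq : √(a ^ 2 - b ^ 2) ^ 2 = a ^ 2 - b ^ 2 := Real.sq_sqrt hpos.le
  field_simp
  linear_combination (-c) * hsq

theorem setIntegral_eq_add_add_of_eqOn {α : Type*} [MeasurableSpace α] {μ : Measure α}
    {s : Set α} {F A B C : α → ℝ} (hs : MeasurableSet s)
    (h : EqOn F (fun x => A x + B x + C x) s) (hF : IntegrableOn F s μ)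
    (hA : IntegrableOn A s μ) (hC : IntegrableOn C s μ) :
    ∫ x in s, F x ∂μ = (∫ x in s, A x ∂μ) + (∫ x in s, B x ∂μ) + ∫ x in s, C x ∂μ := by
  have hB : IntegrableOn B s μ :=
    ((hF.sub hA).sub hC).congr_fun (fun x hx => by simp only [Pi.sub_apply, h hx]; ring) hs
  rw [setIntegral_congr_fun hs h, integral_add (f := fun x => A x + B x) (hA.add hB) hC, integral_add hA hB]

theorem nambu_goto_energy_decomposition_general (s₀ s₁ : ℝ) (h0 : 0 < s₀) (h01 : s₀ < s₁)
    (f g : ℝ → ℝ)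
    (hf0 : 0 < f s₀)
    (hfgt : ∀ s ∈ Ioc s₀ s₁, f s₀ < f s)
    (hg : ContinuousOn g (Ioc 0 s₁))
    (h1 : IntegrableOn (fun s => g s * f s / Real.sqrt ((f s) ^ 2 - (f s₀) ^ 2))
      (Ioc s₀ s₁))
    (h2 : IntegrableOn (fun s => (g s / f s) * f s₀ / Real.sqrt ((f s) ^ 2 - (f s₀) ^ 2))
      (Ioc s₀ s₁))
    (h3 : IntegrableOn g (Ioc 0 s₀)) :
    2 * (∫ s in Ioc s₀ s₁, g s * f s / Real.sqrt ((f s) ^ 2 - (f s₀) ^ 2))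
        - 2 * ∫ s in Ioc 0 s₁, g s =
      f s₀ * (2 * ∫ s in Ioc s₀ s₁,
          (g s / f s) * f s₀ / Real.sqrt ((f s) ^ 2 - (f s₀) ^ 2))
        + 2 * (∫ s in Ioc s₀ s₁,
          (g s / f s) * (Real.sqrt ((f s) ^ 2 - (f s₀) ^ 2) - f s))
        - 2 * ∫ s in Ioc 0 s₀, g s := by
  have hgI : IntegrableOn g (Ioc s₀ s₁) :=
    (hg.mono fun s hs => ⟨h0.trans_le hs.1, hs.2⟩).integrableOn_Icc.mono_set
      Ioc_subset_Icc_self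
  have hmass : ∫ s in Ioc 0 s₁, g s = (∫ s in Ioc 0 s₀, g s) + ∫ s in Ioc s₀ s₁, g s := by
    rw [← Ioc_union_Ioc_eq_Ioc h0.le h01.le,
      setIntegral_union (Ioc_disjoint_Ioc_of_le le_rfl) measurableSet_Ioc h3 hgI]
  have henergy := setIntegral_eq_add_add_of_eqOn measurableSet_Ioc
    (fun s hs => mul_div_sqrt_sq_sub_sq_eq (g s) (f s) (f s₀) hf0.le (hfgt s hs))
    h1 (h2.const_mul (f s₀)) hgI
  rw [integral_const_mul] at henergy
  linarith

/-- Decomposition of the renormalized on-shell Nambu–Goto energy: with the quark-mass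
subtraction `2∫_0^{s₁} g`, the energy `2∫_{s₀}^{s₁} g·f/√(f² − f(s₀)²) − 2∫_0^{s₁} g`
equals `f(s₀)·L(s₀) + 2∫_{s₀}^{s₁} (g/f)·(√(f² − f(s₀)²) − f) − 2∫_0^{s₀} g`, where
`L(s₀) = 2∫_{s₀}^{s₁} (g/f)·f(s₀)/√(f² − f(s₀)²)`. -/
theorem nambu_goto_energy_decomposition (s₀ s₁ : ℝ) (h0 : 0 < s₀) (h01 : s₀ < s₁)
    (f g : ℝ → ℝ)
    (hf : ContinuousOn f (Icc s₀ s₁)) (hf0 : 0 < f s₀)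
    (hfgt : ∀ s ∈ Ioc s₀ s₁, f s₀ < f s)
    (hg : ContinuousOn g (Ioc 0 s₁)) (hgnn : ∀ s ∈ Ioc 0 s₁, 0 ≤ g s)
    (h1 : IntegrableOn (fun s => g s * f s / Real.sqrt ((f s) ^ 2 - (f s₀) ^ 2))
      (Ioc s₀ s₁))
    (h2 : IntegrableOn (fun s => (g s / f s) * f s₀ / Real.sqrt ((f s) ^ 2 - (f s₀) ^ 2))
      (Ioc s₀ s₁))
    (h3 : IntegrableOn g (Ioc 0 s₀)) :
    2 * (∫ s in Ioc s₀ s₁, g s * f s / Real.sqrt ((f s) ^ 2 - (f s₀) ^ 2))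
        - 2 * ∫ s in Ioc 0 s₁, g s =
      f s₀ * (2 * ∫ s in Ioc s₀ s₁,
          (g s / f s) * f s₀ / Real.sqrt ((f s) ^ 2 - (f s₀) ^ 2))
        + 2 * (∫ s in Ioc s₀ s₁,
          (g s / f s) * (Real.sqrt ((f s) ^ 2 - (f s₀) ^ 2) - f s))
        - 2 * ∫ s in Ioc 0 s₀, g s :=
  nambu_goto_energy_decomposition_general s₀ s₁ h0 h01 f g hf0 hfgt hg h1 h2 h3
end
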